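/- Let $p$ be a complex polynomial in $n$ variables, viewed as a holomorphic (hence smooth) function $p : \mathbb{C}^n \to \mathbb{C}$. Then the set of critical values of $p$ (i.e., the image under $p$ of the set of points where all $n$ complex partial derivatives of $p$ vanish simultaneously) is a finite subset of $\mathbb{C}$. -/

import Mathlib

open MvPolynomial

lemma bare_chain_rule {L : Type} [CommRing L] [Algebra ℂ L] {n : ℕ}
    (D : L → L) (hadd : ∀ x y, D (x + y) = D x + D y)
    (hmul : ∀ x y, D (x * y) = x * D y + y * D x)
    (halg : ∀ c : ℂ, D (algebraMap ℂ L c) = 0)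
    (ξ : Fin n → L) (q : MvPolynomial (Fin n) ℂ) :
    D (aeval ξ q) = ∑ i, aeval ξ (pderiv i q) * D (ξ i) := by
  induction q using MvPolynomial.induction_on with
  | C c => simp [halg c, MvPolynomial.algHom_C]
  | add f g hf hg =>
      simp only [map_add, hadd, hf, hg, ← Finset.sum_add_distrib]
      congr 1; ext i; ring
  | mul_X f i hf =>
      simp only [map_mul, aeval_X, hmul, hf]
      rw [Finset.mul_sum]
      have : ∀ j, pderiv j (f * X i) = pderiv j f * X i + f * pderiv j (X i) := by
        intro j; simp [pderiv_mul]; ring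
      simp only [this, map_add, map_mul, aeval_X, add_mul, Finset.sum_add_distrib]
      rw [add_comm]
      congr 1
      · apply Finset.sum_congr rfl; intro j _; ring
      · rw [Finset.sum_eq_single i]
        · simp
        · intro j _ hj; simp [pderiv_X, hj, Pi.single_apply]
        · simp


open Polynomial

noncomputable section

local notation "K0" => FractionRing (Polynomial ℂ)

abbrev algK : Polynomial ℂ →+* K0 := algebraMap (Polynomial ℂ) K0

lemma algK_inj : Function.Injective (algK) :=
  IsFractionRing.injective (Polynomial ℂ) K0

lemma algK_ne_zero {b : Polynomial ℂ} (hb : b ≠ 0) : algK b ≠ 0 := by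
  simpa using fun h => hb (algK_inj (by simpa using h))

/-- quotient-rule formula -/
def Fq (a b : Polynomial ℂ) : K0 :=
  algK (derivative a * b - a * derivative b) / (algK b) ^ 2

lemma Fq_eq (a b c d : Polynomial ℂ) (hb : b ≠ 0) (hd : d ≠ 0)
    (h : algK a / algK b = algK c / algK d) : Fq a b = Fq c d := by
  have hb' := algK_ne_zero hb
  have hd' := algK_ne_zero hd
  rw [div_eq_div_iff hb' hd'] at h
  have hcross : a * d = c * b := by
    apply algK_inj; rw [map_mul, map_mul]; exact h
  have hderiv : derivative a * d + a * derivative d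
      = derivative c * b + c * derivative b := by
    have := congrArg derivative hcross
    simpa [derivative_mul] using this
  unfold Fq
  rw [div_eq_div_iff (pow_ne_zero 2 hb') (pow_ne_zero 2 hd')]
  rw [← map_pow, ← map_pow, ← map_mul, ← map_mul]
  apply congrArg algK
  linear_combination b * d * hderiv -
    (derivative b * d + derivative d * b) * hcross

lemma repSpec (y : K0) : ∃ ab : Polynomial ℂ × Polynomial ℂ,
    ab.2 ≠ 0 ∧ y = algK ab.1 / algK ab.2 := by
  obtain ⟨a, b, hb, h⟩ := IsFractionRing.div_surjective (A := Polynomial ℂ) y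
  exact ⟨(a, b), nonZeroDivisors.ne_zero hb, h.symm⟩

/-- Derivative extended to the field of rational functions. -/
def D0 (y : K0) : K0 := Fq (repSpec y).choose.1 (repSpec y).choose.2

lemma D0_eq {y : K0} {a b : Polynomial ℂ} (hb : b ≠ 0)
    (h : y = algK a / algK b) : D0 y = Fq a b := by
  obtain ⟨h1, h2⟩ := (repSpec y).choose_spec
  exact Fq_eq _ _ _ _ h1 hb (h2.symm.trans h)

lemma D0_algK (a : Polynomial ℂ) : D0 (algK a) = algK (derivative a) := by
  rw [D0_eq (y := algK a) (a := a) (b := 1) one_ne_zero (by simp)]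
  simp [Fq]

set_option maxHeartbeats 1000000 in
set_option synthInstance.maxHeartbeats 1000000 in
lemma D0_add (x y : K0) : D0 (x + y) = D0 x + D0 y := by
  obtain ⟨⟨a, b⟩, hb, hx⟩ := repSpec x
  obtain ⟨⟨c, d⟩, hd, hy⟩ := repSpec y
  have hb' := algK_ne_zero hb
  have hd' := algK_ne_zero hd
  have hxy : x + y = algK (a * d + c * b) / algK (b * d) := by
    rw [hx, hy, div_add_div _ _ hb' hd', map_mul, map_add, map_mul, map_mul]
    ring_nf
  rw [D0_eq hb hx, D0_eq hd hy, D0_eq (mul_ne_zero hb hd) hxy]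
  unfold Fq
  have hbd' := mul_ne_zero hb' hd'
  push_cast [map_mul, map_add, map_sub, derivative_mul, derivative_add]
  field_simp
  ring

set_option maxHeartbeats 1000000 in
set_option synthInstance.maxHeartbeats 1000000 in
lemma D0_mul (x y : K0) : D0 (x * y) = x * D0 y + y * D0 x := by
  obtain ⟨⟨a, b⟩, hb, hx⟩ := repSpec x
  obtain ⟨⟨c, d⟩, hd, hy⟩ := repSpec y
  have hb' := algK_ne_zero hb
  have hd' := algK_ne_zero hd
  have hxy : x * y = algK (a * c) / algK (b * d) := by
    rw [hx, hy, div_mul_div_comm, map_mul, map_mul]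
  rw [D0_eq hb hx, D0_eq hd hy, D0_eq (mul_ne_zero hb hd) hxy, hx, hy]
  unfold Fq
  push_cast [map_mul, map_add, map_sub, derivative_mul]
  field_simp
  ring


noncomputable section

open TrivSqZeroExt

lemma derivation_extend (K L : Type) [Field K] [Field L] [Algebra K L]
    [Algebra.IsSeparable K L]
    (d0 : K → L)
    (h_add : ∀ x y, d0 (x + y) = d0 x + d0 y)
    (h_mul : ∀ x y, d0 (x * y) =
      algebraMap K L x * d0 y + algebraMap K L y * d0 x) :
    ∃ D : L → L, (∀ x y, D (x + y) = D x + D y) ∧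
      (∀ x y, D (x * y) = x * D y + y * D x) ∧
      (∀ x : K, D (algebraMap K L x) = d0 x) := by
  haveI : Algebra.FormallyEtale K L := Algebra.FormallyEtale.of_isSeparable K L
  have d0_zero : d0 0 = 0 := by
    have h := h_add 0 0; simp only [add_zero] at h
    exact left_eq_add.mp h
  have d0_one : d0 1 = 0 := by
    have h := h_mul 1 1
    simp only [mul_one, map_one, one_mul] at h
    exact left_eq_add.mp h
  classical
  let Φ : K →+* DualNumber L :=
    { toFun := fun x => ⟨algebraMap K L x, d0 x⟩
      map_one' := by
        refine TrivSqZeroExt.ext ?_ ?_ <;>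
          simp [fst_mk, snd_mk, d0_one, fst_one, snd_one]
      map_mul' := fun x y => by
        refine TrivSqZeroExt.ext ?_ ?_
        · simp [fst_mk, fst_mul, map_mul]
          rfl
        · simp [snd_mk, snd_mul, h_mul, smul_eq_mul, op_smul_eq_smul]
          change _ = algebraMap K L x * d0 y + d0 x * algebraMap K L y
          ring
      map_zero' := by
        refine TrivSqZeroExt.ext ?_ ?_ <;>
          simp [fst_mk, snd_mk, d0_zero, fst_zero, snd_zero]
      map_add' := fun x y => by
        refine TrivSqZeroExt.ext ?_ ?_ <;>
          simp [fst_mk, snd_mk, h_add, fst_add, snd_add, map_add] <;> rfl }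
  letI : Algebra K (DualNumber L) := Φ.toAlgebra
  let f1 : DualNumber L →+* L := (TrivSqZeroExt.fstHom L L L).toRingHom
  have hf1surj : Function.Surjective f1 := fun l => ⟨⟨l, 0⟩, rfl⟩
  let I : Ideal (DualNumber L) := RingHom.ker f1
  have hImul : I * I ≤ ⊥ := by
    rw [Ideal.mul_le]
    intro a ha b hb
    rw [RingHom.mem_ker] at ha hb
    rw [Ideal.mem_bot]
    refine TrivSqZeroExt.ext ?_ ?_
    · rw [fst_mul]
      change f1 a * f1 b = 0
      rw [ha, hb, mul_zero]
    · rw [snd_mul]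
      change f1 a • b.snd + MulOpposite.op (f1 b) • a.snd = snd 0
      rw [ha, hb]
      simp
  have hI : I ^ 2 = ⊥ := by rw [pow_two]; exact le_bot_iff.mp hImul
  let e : (DualNumber L ⧸ I) ≃+* L := RingHom.quotientKerEquivOfSurjective hf1surj
  have he : ∀ b : DualNumber L, e (Ideal.Quotient.mk I b) = f1 b := fun b => rfl
  let g : L →ₐ[K] DualNumber L ⧸ I :=
    { toRingHom := e.symm.toRingHom
      commutes' := fun x => by
        apply e.injective
        show e (e.symm (algebraMap K L x)) = e (algebraMap K (DualNumber L ⧸ I) x)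
        rw [RingEquiv.apply_symm_apply]
        have h1 : algebraMap K (DualNumber L ⧸ I) x = Ideal.Quotient.mk I (Φ x) := rfl
        rw [h1, he]
        rfl }
  let ℓ : L →ₐ[K] DualNumber L := Algebra.FormallySmooth.lift I ⟨2, hI⟩ g
  have hfst : ∀ y : L, (ℓ y).fst = y := by
    intro y
    have h1 : Ideal.Quotient.mk I (ℓ y) = g y := Algebra.FormallySmooth.mk_lift I ⟨2, hI⟩ g y
    have h2 := congrArg e h1
    rw [he] at h2
    have h3 : e (g y) = y := e.apply_symm_apply y
    rw [h3] at h2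
    exact h2
  refine ⟨fun y => (ℓ y).snd, ?_, ?_, ?_⟩
  · intro x y
    show (ℓ (x + y)).snd = (ℓ x).snd + (ℓ y).snd
    rw [map_add, snd_add]
  · intro x y
    show (ℓ (x * y)).snd = x * (ℓ y).snd + y * (ℓ x).snd
    rw [map_mul, snd_mul, hfst, hfst]
    simp [smul_eq_mul, op_smul_eq_smul]
    ring
  · intro x
    show (ℓ (algebraMap K L x)).snd = d0 x
    have h1 : ℓ (algebraMap K L x) = algebraMap K (DualNumber L) x := ℓ.commutes x
    rw [h1]
    rfl

open Polynomial MvPolynomial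

noncomputable section

set_option maxHeartbeats 2000000 in
set_option synthInstance.maxHeartbeats 1000000 in
/-- The set of critical values of a complex polynomial in `n` variables
(values of `p` at points where all `n` partial derivatives of `p`
vanish simultaneously) is a finite subset of `ℂ`. -/
theorem finite_critical_values_complex_polynomial (n : ℕ)
    (p : MvPolynomial (Fin n) ℂ) :
    Set.Finite ((fun x : Fin n → ℂ => MvPolynomial.eval x p) ''
      {x : Fin n → ℂ |
        ∀ i : Fin n, MvPolynomial.eval x (MvPolynomial.pderiv i p) = 0}) := by
  classical
  let J : Ideal (MvPolynomial (Fin n) ℂ) := Ideal.span (Set.range fun i => pderiv i p)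
  let φ : Polynomial ℂ →ₐ[ℂ] MvPolynomial (Fin n) ℂ := Polynomial.aeval p
  by_cases hcase : ∃ g : Polynomial ℂ, g ≠ 0 ∧ φ g ∈ J
  · -- critical values are roots of g
    obtain ⟨g, hg0, hgJ⟩ := hcase
    refine Set.Finite.subset (Polynomial.finite_setOf_isRoot hg0) ?_
    rintro c ⟨x, hx, rfl⟩
    have hxJ : J ≤ RingHom.ker (MvPolynomial.eval x) := by
      rw [Ideal.span_le]
      rintro _ ⟨i, rfl⟩
      exact hx i
    have hae : ∀ a : MvPolynomial (Fin n) ℂ,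
        MvPolynomial.aeval x a = MvPolynomial.eval x a := fun a => by
      rw [MvPolynomial.aeval_def, MvPolynomial.eval]
      rfl
    have h1 : MvPolynomial.eval x (φ g) = Polynomial.eval (MvPolynomial.eval x p) g := by
      have h2 := Polynomial.aeval_algHom_apply (MvPolynomial.aeval (R := ℂ) x) p g
      rw [hae, hae] at h2
      rw [← h2, ← Polynomial.coe_aeval_eq_eval]
    have h3 := hxJ hgJ
    rw [RingHom.mem_ker] at h3
    show Polynomial.IsRoot g _
    rw [Polynomial.IsRoot, ← h1]
    exact h3
  · exfalso
    push_neg at hcase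
    -- the multiplicative set {g(p) : g ≠ 0}
    let S : Submonoid (MvPolynomial (Fin n) ℂ) :=
      Submonoid.map (φ.toRingHom : ℂ[X] →+* MvPolynomial (Fin n) ℂ).toMonoidHom
        (nonZeroDivisors ℂ[X])
    have hJS : Disjoint (J : Set (MvPolynomial (Fin n) ℂ)) (S : Set _) := by
      rw [Set.disjoint_left]
      rintro a haJ ⟨g, hg, rfl⟩
      exact hcase g (nonZeroDivisors.ne_zero hg) haJ
    obtain ⟨P, hPprime, hJP, hPS⟩ := Ideal.exists_le_prime_disjoint J S hJS
    haveI := hPprime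
    -- quotient domain
    let π : MvPolynomial (Fin n) ℂ →+* (MvPolynomial (Fin n) ℂ ⧸ P) := Ideal.Quotient.mk P
    let T : Submonoid (MvPolynomial (Fin n) ℂ ⧸ P) := Submonoid.map π S
    have hT0 : (0 : MvPolynomial (Fin n) ℂ ⧸ P) ∉ T := by
      rintro ⟨s, hs, hs0⟩
      have : s ∈ P := by
        rwa [← Ideal.Quotient.eq_zero_iff_mem]
      exact Set.disjoint_left.mp hPS this hs
    have hTle : T ≤ nonZeroDivisors (MvPolynomial (Fin n) ℂ ⧸ P) := by
      intro t ht
      exact mem_nonZeroDivisors_of_ne_zero (fun h => hT0 (h ▸ ht))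
    haveI : IsDomain (Localization T) :=
      IsLocalization.isDomain_localization hTle
    obtain ⟨M, hM⟩ := Ideal.exists_maximal (Localization T)
    haveI := hM
    haveI : M.IsTwoSided := ⟨fun b ha => mul_comm b _ ▸ M.smul_mem _ ha⟩
    letI L := Localization T ⧸ M
    letI : Field L := Ideal.Quotient.field (R := Localization T) M
    -- the point in L
    let ρ : MvPolynomial (Fin n) ℂ →+* L :=
      (Ideal.Quotient.mk M).comp ((algebraMap _ (Localization T)).comp π)
    have hρS : ∀ s ∈ S, IsUnit (ρ s) := by
      intro s hs
      have h1 : IsUnit (algebraMap _ (Localization T) (π s)) :=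
        IsLocalization.map_units (Localization T) ⟨π s, Submonoid.mem_map_of_mem _ hs⟩
      exact h1.map (Ideal.Quotient.mk M)
    have hρC : ∀ c : ℂ, algebraMap ℂ L c = ρ (algebraMap ℂ _ c) := by
      intro c
      rw [IsScalarTower.algebraMap_apply ℂ (Localization T) L,
          IsScalarTower.algebraMap_apply ℂ (MvPolynomial (Fin n) ℂ ⧸ P) (Localization T),
          IsScalarTower.algebraMap_apply ℂ (MvPolynomial (Fin n) ℂ)
            (MvPolynomial (Fin n) ℂ ⧸ P)]
      rfl
    have hunits : ∀ g : nonZeroDivisors ℂ[X],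
        IsUnit ((ρ.comp (φ.toRingHom : ℂ[X] →+* _)) g) := by
      rintro ⟨g, hg⟩
      exact hρS _ ⟨g, hg, rfl⟩
    let ψ : FractionRing ℂ[X] →+* L := IsLocalization.lift hunits
    letI algK0L : Algebra (FractionRing ℂ[X]) L := ψ.toAlgebra
    have hψ : ∀ g : ℂ[X], ψ (algebraMap ℂ[X] (FractionRing ℂ[X]) g) = ρ (φ g) :=
      fun g => IsLocalization.lift_eq hunits g
    have htower : ∀ c : ℂ, algebraMap ℂ L c
        = ψ (algebraMap ℂ (FractionRing ℂ[X]) c) := by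
      intro c
      have h1 : algebraMap ℂ (FractionRing ℂ[X]) c
          = algebraMap ℂ[X] (FractionRing ℂ[X]) (C c) := by
        rw [IsScalarTower.algebraMap_apply ℂ ℂ[X] (FractionRing ℂ[X])]
        rfl
      rw [h1, hψ, hρC]
      congr 1
      exact (Polynomial.aeval_C p c).symm
    -- the point
    let ξ : Fin n → L := fun i => ρ (MvPolynomial.X i)
    let ρA : MvPolynomial (Fin n) ℂ →ₐ[ℂ] L := { ρ with commutes' := fun c => (hρC c).symm }
    have hρaeval : ∀ a, MvPolynomial.aeval ξ a = ρ a := by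
      intro a
      have := MvPolynomial.aeval_unique ρA
      calc MvPolynomial.aeval ξ a = MvPolynomial.aeval (ρA ∘ MvPolynomial.X) a := rfl
        _ = ρA a := by rw [← this]
        _ = ρ a := rfl
    have hρP : ∀ a ∈ P, ρ a = 0 := by
      intro a ha
      show (Ideal.Quotient.mk M) (algebraMap _ (Localization T) (π a)) = 0
      have : π a = 0 := Ideal.Quotient.eq_zero_iff_mem.mpr ha
      rw [this, map_zero, map_zero]
    -- ρ a lands in the K0-subalgebra generated by ξ
    have hρmem : ∀ a, ρ a ∈ Algebra.adjoin (FractionRing ℂ[X]) (Set.range ξ) := by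
      intro a
      induction a using MvPolynomial.induction_on with
      | C c =>
          have h0 : ρ (MvPolynomial.C c) = algebraMap ℂ L c := (hρC c).symm
          rw [h0, htower c]
          exact Subalgebra.algebraMap_mem _ _
      | add f g hf hg => rw [map_add]; exact Subalgebra.add_mem _ hf hg
      | mul_X f i hf =>
          rw [map_mul]
          exact Subalgebra.mul_mem _ hf (Algebra.subset_adjoin ⟨i, rfl⟩)
    haveI hFT : Algebra.FiniteType (FractionRing ℂ[X]) L := by
      refine ⟨⟨Finset.image ξ Finset.univ, ?_⟩⟩
      rw [eq_top_iff]
      rintro y -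
      have hcoe : (Finset.image ξ Finset.univ : Set L) = Set.range ξ := by
        ext z; simp
      rw [hcoe]
      obtain ⟨b', rfl⟩ := Ideal.Quotient.mk_surjective (I := M) y
      obtain ⟨⟨b, t⟩, rfl⟩ := IsLocalization.mk'_surjective T b'
      obtain ⟨a, hba⟩ := Ideal.Quotient.mk_surjective (I := P) b
      obtain ⟨s, hsS, hts⟩ := t.2
      obtain ⟨g, hg, rfl⟩ := hsS
      have hspec := IsLocalization.mk'_spec (Localization T) b t
      have h2 := congrArg (Ideal.Quotient.mk M) hspec
      rw [map_mul] at h2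
      have ht := congrArg (algebraMap _ (Localization T)) hts
      have hu : (Ideal.Quotient.mk M) (algebraMap _ (Localization T)
          (t : MvPolynomial (Fin n) ℂ ⧸ P)) =
          algebraMap (FractionRing ℂ[X]) L (algebraMap ℂ[X] (FractionRing ℂ[X]) g) := by
        rw [← ht]
        exact (hψ g).symm
      have hune : algebraMap ℂ[X] (FractionRing ℂ[X]) g ≠ 0 := by
        intro h
        exact nonZeroDivisors.ne_zero hg
          (IsFractionRing.injective ℂ[X] (FractionRing ℂ[X]) (by simpa using h))
      have hUne : algebraMap (FractionRing ℂ[X]) L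
          (algebraMap ℂ[X] (FractionRing ℂ[X]) g) ≠ 0 := by
        rw [map_ne_zero_iff _ (RingHom.injective _)]
        exact hune
      rw [hu] at h2
      have hρb : (Ideal.Quotient.mk M) (algebraMap _ (Localization T) b) = ρ a := by
        rw [← hba]; rfl
      rw [hρb] at h2
      have hkey := (eq_mul_inv_iff_mul_eq₀ hUne).mpr h2
      rw [hkey, ← map_inv₀]
      exact Subalgebra.mul_mem _ (hρmem a) (Subalgebra.algebraMap_mem _ _)
    haveI hfin : Module.Finite (FractionRing ℂ[X]) L :=
      finite_of_finite_type_of_isJacobsonRing _ _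
    haveI : CharZero (FractionRing ℂ[X]) :=
      charZero_of_injective_algebraMap (IsFractionRing.injective ℂ[X] (FractionRing ℂ[X]))
    haveI : Algebra.IsSeparable (FractionRing ℂ[X]) L :=
      ⟨fun x => (minpoly.irreducible (IsIntegral.of_finite (FractionRing ℂ[X]) x)).separable⟩
    obtain ⟨D, hDadd, hDmul, hDalg⟩ := derivation_extend (FractionRing ℂ[X]) L
      (fun y => algebraMap (FractionRing ℂ[X]) L (D0 y))
      (fun x y => by
        show algebraMap (FractionRing ℂ[X]) L (D0 (x + y)) = _
        rw [D0_add, map_add])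
      (fun x y => by
        show algebraMap (FractionRing ℂ[X]) L (D0 (x * y)) = _
        rw [D0_mul, map_add, map_mul, map_mul])
    have halgC : ∀ c : ℂ, D (algebraMap ℂ L c) = 0 := by
      intro c
      rw [htower c]
      have h0 : ψ (algebraMap ℂ (FractionRing ℂ[X]) c)
          = algebraMap (FractionRing ℂ[X]) L (algebraMap ℂ (FractionRing ℂ[X]) c) := rfl
      rw [h0, hDalg]
      have h1 : algebraMap ℂ (FractionRing ℂ[X]) c
          = algebraMap ℂ[X] (FractionRing ℂ[X]) (C c) := by
        rw [IsScalarTower.algebraMap_apply ℂ ℂ[X] (FractionRing ℂ[X])]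
        rfl
      rw [h1, D0_algK, Polynomial.derivative_C, map_zero, map_zero]
    have hchain := bare_chain_rule D hDadd hDmul halgC ξ p
    have hRHS : ∀ i, MvPolynomial.aeval ξ (pderiv i p) = 0 := by
      intro i
      rw [hρaeval]
      exact hρP _ (hJP (Ideal.subset_span ⟨i, rfl⟩))
    have hsum : ∑ i, MvPolynomial.aeval ξ (pderiv i p) * D (ξ i) = 0 :=
      Finset.sum_eq_zero (fun i _ => by rw [hRHS i, zero_mul])
    rw [hsum] at hchain
    have hτ : MvPolynomial.aeval ξ p
        = algebraMap (FractionRing ℂ[X]) L (algebraMap ℂ[X] (FractionRing ℂ[X]) Polynomial.X) := by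
      rw [hρaeval]
      have h0 : ρ p = ρ (φ Polynomial.X) := by
        congr 1
        exact (Polynomial.aeval_X p).symm
      rw [h0, ← hψ]
      rfl
    rw [hτ, hDalg, D0_algK, Polynomial.derivative_X, map_one, map_one] at hchain
    exact one_ne_zero hchain
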